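/- arXiv:2106.00087 — 4 statements merged into one kernel-verified Lean document; each statement's English description precedes it below -/
import Mathlib

section
/- If Z ~ Gamma(α₁+α₂, β) and U ~ Beta(α₁, α₂) are independent, then X = UZ and Y = (1-U)Z are independent with X ~ Gamma(α₁, β) and Y ~ Gamma(α₂, β). -/
/-!
The map `(z, u) ↦ (u z, (1 - u) z)` has Jacobian determinant `-z`, so it pushes the measure
`|z| dz du` forward to Lebesgue measure on the plane. At `(z, u)`, the density of
`Gamma(α₁ + α₂, β) ⊗ Beta(α₁, α₂)` is `|z|` times the density of `Gamma(α₁, β) ⊗ Gamma(α₂, β)` at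
`(u z, (1 - u) z)`. Hence `(X, Y)` has law `Gamma(α₁, β) ⊗ Gamma(α₂, β)`, which gives the two
marginals and independence.
-/

open MeasureTheory ProbabilityTheory
open scoped ENNReal

/-- The Beta(a,b) probability density on (0,1). -/
noncomputable def betaPDFReal (a b x : ℝ) : ℝ :=
  if 0 < x ∧ x < 1 then
    Real.Gamma (a + b) / (Real.Gamma a * Real.Gamma b) * x ^ (a - 1) * (1 - x) ^ (b - 1)
  else 0

/-- The Beta(a,b) distribution on ℝ. -/
noncomputable def betaMeasure (a b : ℝ) : Measure ℝ :=
  volume.withDensity fun x => ENNReal.ofReal (_root_.betaPDFReal a b x)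

lemma map_withDensity_comp {α β : Type*} [MeasurableSpace α] [MeasurableSpace β] {μ : Measure α}
    {φ : α → β} (hφ : Measurable φ) {g : β → ℝ≥0∞} (hg : Measurable g) :
    (μ.withDensity (g ∘ φ)).map φ = (μ.map φ).withDensity g := by
  ext s hs
  rw [Measure.map_apply hφ hs, withDensity_apply _ (hφ hs), withDensity_apply _ hs,
    setLIntegral_map hs hg hφ, Function.comp_def]

lemma indepFun_and_map_eq_of_map_prod_eq {Ω 𝓧 𝓨 : Type*} [MeasurableSpace Ω] [MeasurableSpace 𝓧]
    [MeasurableSpace 𝓨] {P : Measure Ω} [IsFiniteMeasure P] {X : Ω → 𝓧} {Y : Ω → 𝓨}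
    {μ : Measure 𝓧} {ν : Measure 𝓨} [IsProbabilityMeasure μ] [IsProbabilityMeasure ν]
    (hX : AEMeasurable X P) (hY : AEMeasurable Y P)
    (h : P.map (fun ω => (X ω, Y ω)) = μ.prod ν) :
    IndepFun X Y P ∧ P.map X = μ ∧ P.map Y = ν := by
  have hXY : AEMeasurable (fun ω => (X ω, Y ω)) P := hX.prodMk hY
  have hμ : P.map X = μ := by
    change P.map (Prod.fst ∘ fun ω => (X ω, Y ω)) = μ
    rw [← AEMeasurable.map_map_of_aemeasurable (by fun_prop) hXY, h,
      Measure.map_fst_prod, measure_univ, one_smul]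
  have hν : P.map Y = ν := by
    change P.map (Prod.snd ∘ fun ω => (X ω, Y ω)) = ν
    rw [← AEMeasurable.map_map_of_aemeasurable (by fun_prop) hXY, h,
      Measure.map_snd_prod, measure_univ, one_smul]
  refine ⟨?_, hμ, hν⟩
  rw [indepFun_iff_map_prod_eq_prod_map_map hX hY, h, hμ, hν]

lemma lintegral_eq_abs_mul_lintegral_comp_mul_right {c : ℝ} (hc : c ≠ 0) (f : ℝ → ℝ≥0∞) :
    ∫⁻ x, f x = ENNReal.ofReal |c| * ∫⁻ u, f (u * c) := by
  have hmap : ∫⁻ u, f (u * c) = ENNReal.ofReal |c⁻¹| * ∫⁻ x, f x := by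
    refine (lintegral_map_equiv f (MeasurableEquiv.mulRight₀ c hc)).symm.trans ?_
    rw [MeasurableEquiv.coe_mulRight₀, Real.map_volume_mul_right hc, lintegral_smul_measure,
      smul_eq_mul]
  rw [hmap, ← mul_assoc, ← ENNReal.ofReal_mul (abs_nonneg c), ← abs_mul, mul_inv_cancel₀ hc,
    abs_one, ENNReal.ofReal_one, one_mul]

theorem map_withDensity_abs_fst_eq_volume :
    (volume.withDensity fun p : ℝ × ℝ => ENNReal.ofReal |p.1|).map
      (fun p => (p.2 * p.1, (1 - p.2) * p.1)) = volume := by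
  refine Measure.ext_of_lintegral _ fun F hF => ?_
  rw [lintegral_map hF (by fun_prop),
    lintegral_withDensity_eq_lintegral_mul _ (by fun_prop)
      (g := fun p : ℝ × ℝ => F (p.2 * p.1, (1 - p.2) * p.1)) (hF.comp (by fun_prop)),
    Measure.volume_eq_prod, lintegral_prod _ (by fun_prop), lintegral_prod _ hF.aemeasurable]
  symm
  calc ∫⁻ x, ∫⁻ y, F (x, y)
      = ∫⁻ x, ∫⁻ z, F (x, z - x) :=
        lintegral_congr fun x => (lintegral_sub_right_eq_self (fun y => F (x, y)) x).symm
    _ = ∫⁻ z, ∫⁻ x, F (x, z - x) :=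
        lintegral_lintegral_swap (hF.comp (by fun_prop)).aemeasurable
    _ = ∫⁻ z, ∫⁻ u, ENNReal.ofReal |z| * F (u * z, (1 - u) * z) := by
        refine lintegral_congr_ae ?_
        filter_upwards [Measure.ae_ne volume 0] with z hz
        rw [lintegral_eq_abs_mul_lintegral_comp_mul_right hz,
          ← lintegral_const_mul' _ _ ENNReal.ofReal_ne_top]
        simp only [sub_mul, one_mul]

@[fun_prop]
lemma measurable_betaPDFReal (a b : ℝ) : Measurable (_root_.betaPDFReal a b) :=
  Measurable.ite measurableSet_Ioo (by fun_prop) measurable_const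

@[fun_prop]
lemma measurable_gammaPDF (a r : ℝ) : Measurable (gammaPDF a r) :=
  (measurable_gammaPDFReal a r).ennreal_ofReal

lemma betaPDFReal_of_nonpos {a b u : ℝ} (hu : u ≤ 0) : _root_.betaPDFReal a b u = 0 :=
  if_neg fun h => hu.not_gt h.1

lemma betaPDFReal_of_one_le {a b u : ℝ} (hu : 1 ≤ u) : _root_.betaPDFReal a b u = 0 :=
  if_neg fun h => hu.not_gt h.2

section GammaBeta

variable {α₁ α₂ β : ℝ}

lemma gammaPDFReal_mul_gammaPDFReal (hα₁ : 0 < α₁) (hα₂ : 0 < α₂) (hβ : 0 < β) {z u : ℝ}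
    (hz : 0 < z) (hu₀ : 0 < u) (hu₁ : u < 1) :
    z * (gammaPDFReal α₁ β (u * z) * gammaPDFReal α₂ β ((1 - u) * z))
      = gammaPDFReal (α₁ + α₂) β z * _root_.betaPDFReal α₁ α₂ u := by
  have hv : 0 < 1 - u := sub_pos.mpr hu₁
  rw [gammaPDFReal, gammaPDFReal, gammaPDFReal, _root_.betaPDFReal, if_pos (by positivity),
    if_pos (by positivity), if_pos hz.le, if_pos ⟨hu₀, hu₁⟩, Real.mul_rpow hu₀.le hz.le,
    Real.mul_rpow hv.le hz.le, Real.rpow_add hβ]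
  have hzpow : z ^ (α₁ + α₂ - 1) = z ^ (α₁ - 1) * z ^ (α₂ - 1) * z := by
    rw [show α₁ + α₂ - 1 = (α₁ - 1) + ((α₂ - 1) + 1) by ring, Real.rpow_add hz,
      Real.rpow_add hz, Real.rpow_one, mul_assoc]
  have hexp : Real.exp (-(β * (u * z))) * Real.exp (-(β * ((1 - u) * z)))
      = Real.exp (-(β * z)) := by
    rw [← Real.exp_add]; ring_nf
  rw [hzpow, ← hexp]
  field_simp

-- The exceptions are genuine: `0 ^ 0 = 1` makes `gammaPDF 1 β 0 = β ≠ 0`.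
lemma gammaPDF_mul_betaPDF (hα₁ : 0 < α₁) (hα₂ : 0 < α₂) (hβ : 0 < β) {z u : ℝ}
    (hz : z ≠ 0) (hu₀ : u ≠ 0) (hu₁ : u ≠ 1) :
    gammaPDF (α₁ + α₂) β z * ENNReal.ofReal (_root_.betaPDFReal α₁ α₂ u)
      = ENNReal.ofReal |z| * (gammaPDF α₁ β (u * z) * gammaPDF α₂ β ((1 - u) * z)) := by
  rcases hz.lt_or_gt with hz | hz
  · rw [gammaPDF_of_neg hz, zero_mul]
    rcases hu₀.lt_or_gt with hu | hu
    · rw [gammaPDF_of_neg (by nlinarith : (1 - u) * z < 0), mul_zero, mul_zero]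
    · rw [gammaPDF_of_neg (by nlinarith : u * z < 0), zero_mul, mul_zero]
  rcases hu₀.lt_or_gt with hu | hu
  · rw [betaPDFReal_of_nonpos hu.le, gammaPDF_of_neg (by nlinarith : u * z < 0)]
    simp
  rcases hu₁.lt_or_gt with hu' | hu'
  · rw [gammaPDF, gammaPDF, gammaPDF, ← ENNReal.ofReal_mul (gammaPDFReal_nonneg hα₁ hβ _),
      ← ENNReal.ofReal_mul (abs_nonneg z),
      ← ENNReal.ofReal_mul (gammaPDFReal_nonneg (add_pos hα₁ hα₂) hβ _),
      abs_of_pos hz, gammaPDFReal_mul_gammaPDFReal hα₁ hα₂ hβ hz hu hu']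
  · rw [betaPDFReal_of_one_le hu'.le, gammaPDF_of_neg (by nlinarith : (1 - u) * z < 0)]
    simp

lemma gammaPDF_mul_betaPDF_ae_eq (hα₁ : 0 < α₁) (hα₂ : 0 < α₂) (hβ : 0 < β) :
    (fun p : ℝ × ℝ => gammaPDF (α₁ + α₂) β p.1 * ENNReal.ofReal (_root_.betaPDFReal α₁ α₂ p.2))
      =ᵐ[volume] fun p => ENNReal.ofReal |p.1| *
        (gammaPDF α₁ β (p.2 * p.1) * gammaPDF α₂ β ((1 - p.2) * p.1)) := by
  rw [Measure.volume_eq_prod, Filter.EventuallyEq, Measure.ae_prod_iff_ae_ae]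
  · filter_upwards [Measure.ae_ne volume 0] with z hz
    filter_upwards [Measure.ae_ne volume 0, Measure.ae_ne volume 1] with u hu₀ hu₁
    exact gammaPDF_mul_betaPDF hα₁ hα₂ hβ hz hu₀ hu₁
  · exact measurableSet_eq_fun (by fun_prop) (by fun_prop)

theorem map_gammaMeasure_prod_betaMeasure (hα₁ : 0 < α₁) (hα₂ : 0 < α₂) (hβ : 0 < β) :
    ((gammaMeasure (α₁ + α₂) β).prod (_root_.betaMeasure α₁ α₂)).map
      (fun p => (p.2 * p.1, (1 - p.2) * p.1)) = (gammaMeasure α₁ β).prod (gammaMeasure α₂ β) := by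
  set φ : ℝ × ℝ → ℝ × ℝ := fun p => (p.2 * p.1, (1 - p.2) * p.1)
  have hφ : Measurable φ := by fun_prop
  set G : ℝ × ℝ → ℝ≥0∞ := fun q => gammaPDF α₁ β q.1 * gammaPDF α₂ β q.2
  have hG : Measurable G := by fun_prop
  calc ((gammaMeasure (α₁ + α₂) β).prod (_root_.betaMeasure α₁ α₂)).map φ
      = (volume.withDensity ((fun p : ℝ × ℝ => ENNReal.ofReal |p.1|) * (G ∘ φ))).map φ := by
        rw [gammaMeasure, _root_.betaMeasure, prod_withDensity (by fun_prop) (by fun_prop),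
          ← Measure.volume_eq_prod, withDensity_congr_ae (gammaPDF_mul_betaPDF_ae_eq hα₁ hα₂ hβ)]
        rfl
    _ = (volume.prod volume).withDensity G := by
        rw [withDensity_mul _ (by fun_prop) (hG.comp hφ), map_withDensity_comp hφ hG,
          map_withDensity_abs_fst_eq_volume, Measure.volume_eq_prod]
    _ = (gammaMeasure α₁ β).prod (gammaMeasure α₂ β) :=
        (prod_withDensity (by fun_prop) (by fun_prop)).symm

end GammaBeta

theorem gamma_beta_product_indep
    {Ω : Type*} [MeasurableSpace Ω] (P : Measure Ω) [IsProbabilityMeasure P]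
    (α₁ α₂ β : ℝ) (hα₁ : 0 < α₁) (hα₂ : 0 < α₂) (hβ : 0 < β)
    (Z U : Ω → ℝ) (hZ : Measurable Z) (hU : Measurable U)
    (hZU : IndepFun Z U P)
    (hZlaw : Measure.map Z P = gammaMeasure (α₁ + α₂) β)
    (hUlaw : Measure.map U P = _root_.betaMeasure α₁ α₂) :
    IndepFun (fun ω => U ω * Z ω) (fun ω => (1 - U ω) * Z ω) P ∧
    Measure.map (fun ω => U ω * Z ω) P = gammaMeasure α₁ β ∧
    Measure.map (fun ω => (1 - U ω) * Z ω) P = gammaMeasure α₂ β := by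
  have := isProbabilityMeasure_gammaMeasure hα₁ hβ
  have := isProbabilityMeasure_gammaMeasure hα₂ hβ
  have hZU_law : P.map (fun ω => (Z ω, U ω))
      = (gammaMeasure (α₁ + α₂) β).prod (_root_.betaMeasure α₁ α₂) := by
    rw [← hZlaw, ← hUlaw]
    exact (indepFun_iff_map_prod_eq_prod_map_map hZ.aemeasurable hU.aemeasurable).mp hZU
  refine indepFun_and_map_eq_of_map_prod_eq (by fun_prop) (by fun_prop) ?_
  rw [← map_gammaMeasure_prod_betaMeasure hα₁ hα₂ hβ, ← hZU_law,
    Measure.map_map (by fun_prop) (by fun_prop)]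
  rfl
end

section
/- For the thinned Gamma process step X₁ = B·X₀ + ζ with independent X₀ ~ Gamma(α,β), B ~ Beta(αρ, α(1-ρ)), ζ ~ Gamma(α(1-ρ), β), the correlation of X₀ and X₁ equals ρ. -/
open MeasureTheory ProbabilityTheory

/-!
Since `B` and `ζ` are independent of `X₀`, `Cov(X₀, X₁) = E[B] Var(X₀) = ρ Var(X₀)`, so the
correlation is `ρ` as soon as `Var(X₁) = Var(X₀)`. By independence,
`Var(X₁) = Var(B X₀) + Var(ζ)`, and the moments of the beta and gamma laws give
`Var(B X₀) = αρ / β²`, as the beta-gamma algebra `B X₀ ~ Gamma(αρ, β)` predicts; adding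
`Var(ζ) = α(1 - ρ) / β²` gives `α / β² = Var(X₀)`. The first two moments of both laws come from
tilting the density by `x`: `x · Gamma(a, r)(dx) = a / r · Gamma(a + 1, r)(dx)` and
`x · Beta(a, b)(dx) = a / (a + b) · Beta(a + 1, b)(dx)`.
-/

open Real

namespace MeasureTheory

variable {α : Type*} [MeasurableSpace α] {μ : Measure α} {f h k : α → ℝ} {c : ℝ}

lemma integral_withDensity_ofReal (hf : Measurable f) (hf0 : 0 ≤ f) (g : α → ℝ) :
    ∫ x, g x ∂μ.withDensity (fun x ↦ ENNReal.ofReal (f x)) = ∫ x, f x * g x ∂μ := by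
  rw [integral_withDensity_eq_integral_toReal_smul hf.ennreal_ofReal
    (ae_of_all _ fun _ ↦ ENNReal.ofReal_lt_top)]
  simp_rw [ENNReal.toReal_ofReal (hf0 _), smul_eq_mul]

lemma integrable_withDensity_ofReal_iff (hf : Measurable f) (hf0 : 0 ≤ f) {g : α → ℝ} :
    Integrable g (μ.withDensity fun x ↦ ENNReal.ofReal (f x)) ↔
      Integrable (fun x ↦ f x * g x) μ := by
  rw [integrable_withDensity_iff_integrable_smul' hf.ennreal_ofReal
    (ae_of_all _ fun _ ↦ ENNReal.ofReal_lt_top)]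
  simp_rw [ENNReal.toReal_ofReal (hf0 _), smul_eq_mul]

lemma integral_mul_withDensity_ofReal_of_mul_eq (hf : Measurable f) (hf0 : 0 ≤ f)
    (hh : Measurable h) (hh0 : 0 ≤ h) (hfk : ∀ x, f x * k x = c * h x) (g : α → ℝ) :
    ∫ x, k x * g x ∂μ.withDensity (fun x ↦ ENNReal.ofReal (f x)) =
      c * ∫ x, g x ∂μ.withDensity (fun x ↦ ENNReal.ofReal (h x)) := by
  simp_rw [integral_withDensity_ofReal hf hf0, integral_withDensity_ofReal hh hh0,
    ← mul_assoc, hfk, mul_assoc, integral_const_mul]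

lemma Integrable.mul_withDensity_ofReal_of_mul_eq (hf : Measurable f) (hf0 : 0 ≤ f)
    (hh : Measurable h) (hh0 : 0 ≤ h) (hfk : ∀ x, f x * k x = c * h x) {g : α → ℝ}
    (hg : Integrable g (μ.withDensity fun x ↦ ENNReal.ofReal (h x))) :
    Integrable (fun x ↦ k x * g x) (μ.withDensity fun x ↦ ENNReal.ofReal (f x)) := by
  rw [integrable_withDensity_ofReal_iff hf hf0]
  rw [integrable_withDensity_ofReal_iff hh hh0] at hg
  simpa only [← mul_assoc, hfk] using hg.const_mul c

end MeasureTheory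

namespace ProbabilityTheory

section Gamma

variable {a r : ℝ}

lemma gammaPDFReal_mul_self (ha : 0 < a) (hr : 0 < r) (x : ℝ) :
    gammaPDFReal a r x * x = a / r * gammaPDFReal (a + 1) r x := by
  unfold gammaPDFReal
  split_ifs with hx
  · have hxa : x ^ a = x ^ (a - 1) * x := by
      rw [← rpow_add_one' hx (by simpa using ha.ne'), sub_add_cancel]
    rw [add_sub_cancel_right, Gamma_add_one ha.ne', rpow_add_one hr.ne', hxa]
    have := Gamma_pos_of_pos ha
    field_simp
  · simp

lemma integral_mul_gammaMeasure (ha : 0 < a) (hr : 0 < r) (g : ℝ → ℝ) :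
    ∫ x, x * g x ∂gammaMeasure a r = a / r * ∫ x, g x ∂gammaMeasure (a + 1) r :=
  integral_mul_withDensity_ofReal_of_mul_eq (measurable_gammaPDFReal a r)
    (gammaPDFReal_nonneg ha hr) (measurable_gammaPDFReal _ r)
    (gammaPDFReal_nonneg (by linarith) hr) (gammaPDFReal_mul_self ha hr) g

lemma _root_.MeasureTheory.Integrable.mul_gammaMeasure (ha : 0 < a) (hr : 0 < r) {g : ℝ → ℝ}
    (hg : Integrable g (gammaMeasure (a + 1) r)) :
    Integrable (fun x ↦ x * g x) (gammaMeasure a r) :=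
  hg.mul_withDensity_ofReal_of_mul_eq (measurable_gammaPDFReal a r)
    (gammaPDFReal_nonneg ha hr) (measurable_gammaPDFReal _ r)
    (gammaPDFReal_nonneg (by linarith) hr) (gammaPDFReal_mul_self ha hr)

lemma integrable_id_gammaMeasure (ha : 0 < a) (hr : 0 < r) :
    Integrable id (gammaMeasure a r) := by
  have := isProbabilityMeasure_gammaMeasure (a := a + 1) (by linarith) hr
  have h := (integrable_const (1 : ℝ)).mul_gammaMeasure ha hr
  simp only [mul_one] at h
  exact h

lemma integral_id_gammaMeasure (ha : 0 < a) (hr : 0 < r) :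
    ∫ x, x ∂gammaMeasure a r = a / r := by
  have := isProbabilityMeasure_gammaMeasure (a := a + 1) (by linarith) hr
  simpa using integral_mul_gammaMeasure ha hr 1

lemma memLp_id_gammaMeasure (ha : 0 < a) (hr : 0 < r) :
    MemLp id 2 (gammaMeasure a r) := by
  rw [memLp_two_iff_integrable_sq aestronglyMeasurable_id]
  simpa [sq] using (integrable_id_gammaMeasure (by linarith) hr).mul_gammaMeasure ha hr

lemma integral_sq_gammaMeasure (ha : 0 < a) (hr : 0 < r) :
    ∫ x, x ^ 2 ∂gammaMeasure a r = a * (a + 1) / r ^ 2 := by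
  calc ∫ x, x ^ 2 ∂gammaMeasure a r = ∫ x, x * id x ∂gammaMeasure a r := by simp [sq]
    _ = a / r * ∫ x, x ∂gammaMeasure (a + 1) r := integral_mul_gammaMeasure ha hr id
    _ = a * (a + 1) / r ^ 2 := by rw [integral_id_gammaMeasure (by linarith) hr]; field_simp

lemma variance_id_gammaMeasure (ha : 0 < a) (hr : 0 < r) :
    Var[id; gammaMeasure a r] = a / r ^ 2 := by
  have := isProbabilityMeasure_gammaMeasure ha hr
  rw [variance_eq_sub (memLp_id_gammaMeasure ha hr)]
  simp only [Pi.pow_apply, id_eq]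
  rw [integral_sq_gammaMeasure ha hr, integral_id_gammaMeasure ha hr]
  field_simp
  ring

end Gamma

section Beta

variable {a b : ℝ}

lemma _root_.betaMeasure_eq_betaMeasure (a b : ℝ) :
    _root_.betaMeasure a b = ProbabilityTheory.betaMeasure a b := by
  unfold _root_.betaMeasure ProbabilityTheory.betaMeasure betaPDF
  congr with x
  unfold _root_.betaPDFReal ProbabilityTheory.betaPDFReal beta
  rw [one_div_div]

lemma betaPDFReal_nonneg (ha : 0 < a) (hb : 0 < b) : 0 ≤ betaPDFReal a b := by
  intro x
  by_cases hx : 0 < x ∧ x < 1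
  · exact (betaPDFReal_pos hx.1 hx.2 ha hb).le
  · simp [betaPDFReal, hx]

lemma beta_add_one_left (ha : 0 < a) (hb : 0 < b) : beta (a + 1) b = a / (a + b) * beta a b := by
  unfold beta
  rw [add_right_comm, Gamma_add_one ha.ne', Gamma_add_one (by positivity)]
  have := Gamma_pos_of_pos (add_pos ha hb)
  field_simp

lemma betaPDFReal_mul_self (ha : 0 < a) (hb : 0 < b) (x : ℝ) :
    betaPDFReal a b x * x = a / (a + b) * betaPDFReal (a + 1) b x := by
  unfold betaPDFReal
  split_ifs with hx
  · have hxa : x ^ a = x ^ (a - 1) * x := by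
      rw [← rpow_add_one' hx.1.le (by simpa using ha.ne'), sub_add_cancel]
    rw [add_sub_cancel_right, beta_add_one_left ha hb, hxa]
    have := beta_pos ha hb
    field_simp
  · simp

lemma integral_mul_betaMeasure (ha : 0 < a) (hb : 0 < b) (g : ℝ → ℝ) :
    ∫ x, x * g x ∂betaMeasure a b = a / (a + b) * ∫ x, g x ∂betaMeasure (a + 1) b :=
  integral_mul_withDensity_ofReal_of_mul_eq (measurable_betaPDFReal a b)
    (betaPDFReal_nonneg ha hb) (measurable_betaPDFReal _ b)
    (betaPDFReal_nonneg (by linarith) hb) (betaPDFReal_mul_self ha hb) g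

lemma _root_.MeasureTheory.Integrable.mul_betaMeasure (ha : 0 < a) (hb : 0 < b) {g : ℝ → ℝ}
    (hg : Integrable g (betaMeasure (a + 1) b)) :
    Integrable (fun x ↦ x * g x) (betaMeasure a b) :=
  hg.mul_withDensity_ofReal_of_mul_eq (measurable_betaPDFReal a b)
    (betaPDFReal_nonneg ha hb) (measurable_betaPDFReal _ b)
    (betaPDFReal_nonneg (by linarith) hb) (betaPDFReal_mul_self ha hb)

lemma integrable_id_betaMeasure (ha : 0 < a) (hb : 0 < b) :
    Integrable id (betaMeasure a b) := by
  have := isProbabilityMeasureBeta (α := a + 1) (by linarith) hb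
  have h := (integrable_const (1 : ℝ)).mul_betaMeasure ha hb
  simp only [mul_one] at h
  exact h

lemma integral_id_betaMeasure (ha : 0 < a) (hb : 0 < b) :
    ∫ x, x ∂betaMeasure a b = a / (a + b) := by
  have := isProbabilityMeasureBeta (α := a + 1) (by linarith) hb
  simpa using integral_mul_betaMeasure ha hb 1

lemma memLp_id_betaMeasure (ha : 0 < a) (hb : 0 < b) :
    MemLp id 2 (betaMeasure a b) := by
  rw [memLp_two_iff_integrable_sq aestronglyMeasurable_id]
  simpa [sq] using (integrable_id_betaMeasure (by linarith) hb).mul_betaMeasure ha hb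

lemma integral_sq_betaMeasure (ha : 0 < a) (hb : 0 < b) :
    ∫ x, x ^ 2 ∂betaMeasure a b = a * (a + 1) / ((a + b) * (a + b + 1)) := by
  calc ∫ x, x ^ 2 ∂betaMeasure a b = ∫ x, x * id x ∂betaMeasure a b := by simp [sq]
    _ = a / (a + b) * ∫ x, x ∂betaMeasure (a + 1) b := integral_mul_betaMeasure ha hb id
    _ = a * (a + 1) / ((a + b) * (a + b + 1)) := by
      rw [integral_id_betaMeasure (by linarith) hb, add_right_comm]
      field_simp

end Beta

section Moments

variable {Ω : Type*} [MeasurableSpace Ω] {P : Measure Ω} {B X Y Z : Ω → ℝ}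

lemma HasLaw.memLp {E : Type*} [NormedAddCommGroup E] [MeasurableSpace E] {μ : Measure E}
    {X : Ω → E} {p : ENNReal} (hX : HasLaw X μ P) (h : MemLp id p μ) : MemLp X p P := by
  rw [← hX.map_eq] at h
  exact h.comp_of_map hX.aemeasurable

lemma HasLaw.integral_pow {μ : Measure ℝ} (hX : HasLaw X μ P) (n : ℕ) :
    P[X ^ n] = ∫ x, x ^ n ∂μ :=
  hX.integral_comp (f := fun x ↦ x ^ n) (by fun_prop)

lemma IndepFun.sq (hXY : X ⟂ᵢ[P] Y) : (X ^ 2) ⟂ᵢ[P] (Y ^ 2) := by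
  exact hXY.comp (measurable_id.pow_const 2) (measurable_id.pow_const 2)

lemma IndepFun.memLp_two_mul (hXY : X ⟂ᵢ[P] Y) (hX : MemLp X 2 P) (hY : MemLp Y 2 P) :
    MemLp (X * Y) 2 P := by
  rw [memLp_two_iff_integrable_sq (hX.aestronglyMeasurable.mul hY.aestronglyMeasurable)]
  have h := hXY.sq.integrable_mul hX.integrable_sq hY.integrable_sq
  rw [← mul_pow] at h
  exact h

variable [IsProbabilityMeasure P]

lemma IndepFun.variance_mul (hXY : X ⟂ᵢ[P] Y) (hX : MemLp X 2 P) (hY : MemLp Y 2 P) :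
    Var[X * Y; P] = P[X ^ 2] * P[Y ^ 2] - (P[X] * P[Y]) ^ 2 := by
  rw [variance_eq_sub (hXY.memLp_two_mul hX hY), mul_pow,
    hXY.sq.integral_mul_eq_mul_integral (hX.aestronglyMeasurable.pow 2)
      (hY.aestronglyMeasurable.pow 2),
    hXY.integral_mul_eq_mul_integral hX.aestronglyMeasurable hY.aestronglyMeasurable]

lemma IndepFun.covariance_self_mul (hXY : X ⟂ᵢ[P] Y) (hX : MemLp X 2 P) (hY : MemLp Y 2 P) :
    cov[Y, X * Y; P] = P[X] * Var[Y; P] := by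
  have hXY2 : X ⟂ᵢ[P] (Y ^ 2) := by exact hXY.comp measurable_id (measurable_id.pow_const 2)
  have hYXY : Y * (X * Y) = X * Y ^ 2 := by ring
  rw [covariance_eq_sub hY (hXY.memLp_two_mul hX hY), hYXY,
    hXY2.integral_mul_eq_mul_integral hX.aestronglyMeasurable (hY.aestronglyMeasurable.pow 2),
    hXY.integral_mul_eq_mul_integral hX.aestronglyMeasurable hY.aestronglyMeasurable,
    variance_eq_sub hY]
  ring

lemma correlation_mul_add (hBX : B ⟂ᵢ[P] X) (hXZ : X ⟂ᵢ[P] Z) (hB : MemLp B 2 P)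
    (hX : MemLp X 2 P) (hZ : MemLp Z 2 P) (hvar : Var[B * X + Z; P] = Var[X; P])
    (hX0 : Var[X; P] ≠ 0) :
    cov[X, B * X + Z; P] / (√Var[X; P] * √Var[B * X + Z; P]) = P[B] := by
  rw [covariance_add_right hX (hBX.memLp_two_mul hB hX) hZ, hBX.covariance_self_mul hB hX,
    hXZ.covariance_eq_zero hX hZ, add_zero, hvar, mul_self_sqrt (variance_nonneg _ _),
    mul_div_assoc, div_self hX0, mul_one]

lemma IndepFun.variance_mul_of_hasLaw_beta_gamma {p q r : ℝ} (hp : 0 < p) (hq : 0 < q)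
    (hr : 0 < r) (hB : HasLaw B (betaMeasure p q) P) (hX : HasLaw X (gammaMeasure (p + q) r) P)
    (hBX : B ⟂ᵢ[P] X) :
    Var[B * X; P] = p / r ^ 2 := by
  have hpq : 0 < p + q := add_pos hp hq
  rw [hBX.variance_mul (hB.memLp (memLp_id_betaMeasure hp hq))
      (hX.memLp (memLp_id_gammaMeasure hpq hr)),
    hB.integral_pow, hX.integral_pow, hB.integral_eq, hX.integral_eq,
    integral_sq_betaMeasure hp hq, integral_sq_gammaMeasure hpq hr,
    integral_id_betaMeasure hp hq, integral_id_gammaMeasure hpq hr]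
  field_simp
  ring

lemma variance_mul_add_of_hasLaw_beta_gamma {p q r : ℝ} (hp : 0 < p) (hq : 0 < q) (hr : 0 < r)
    (hB : HasLaw B (betaMeasure p q) P) (hX : HasLaw X (gammaMeasure (p + q) r) P)
    (hZ : HasLaw Z (gammaMeasure q r) P) (hBX : B ⟂ᵢ[P] X) (hBXZ : (B * X) ⟂ᵢ[P] Z) :
    Var[B * X + Z; P] = Var[X; P] := by
  have hpq : 0 < p + q := add_pos hp hq
  rw [hBXZ.variance_add ((hBX.memLp_two_mul (hB.memLp (memLp_id_betaMeasure hp hq))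
      (hX.memLp (memLp_id_gammaMeasure hpq hr)))) (hZ.memLp (memLp_id_gammaMeasure hq hr)),
    hBX.variance_mul_of_hasLaw_beta_gamma hp hq hr hB hX, hZ.variance_eq, hX.variance_eq,
    variance_id_gammaMeasure hq hr, variance_id_gammaMeasure hpq hr]
  ring

lemma correlation_mul_add_of_hasLaw_beta_gamma {p q r : ℝ} (hp : 0 < p) (hq : 0 < q)
    (hr : 0 < r) (hB : HasLaw B (betaMeasure p q) P) (hX : HasLaw X (gammaMeasure (p + q) r) P)
    (hZ : HasLaw Z (gammaMeasure q r) P) (hBX : B ⟂ᵢ[P] X) (hXZ : X ⟂ᵢ[P] Z)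
    (hBXZ : (B * X) ⟂ᵢ[P] Z) :
    cov[X, B * X + Z; P] / (√Var[X; P] * √Var[B * X + Z; P]) = p / (p + q) := by
  have hpq : 0 < p + q := add_pos hp hq
  have hvar : Var[X; P] ≠ 0 := by
    rw [hX.variance_eq, variance_id_gammaMeasure hpq hr]
    positivity
  rw [correlation_mul_add hBX hXZ (hB.memLp (memLp_id_betaMeasure hp hq))
      (hX.memLp (memLp_id_gammaMeasure hpq hr)) (hZ.memLp (memLp_id_gammaMeasure hq hr))
      (variance_mul_add_of_hasLaw_beta_gamma hp hq hr hB hX hZ hBX hBXZ) hvar,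
    hB.integral_eq, integral_id_betaMeasure hp hq]

end Moments

end ProbabilityTheory

theorem thinned_gamma_correlation
    {Ω : Type*} [MeasurableSpace Ω] (P : Measure Ω) [IsProbabilityMeasure P]
    (α β ρ : ℝ) (hα : 0 < α) (hβ : 0 < β) (hρ₀ : 0 < ρ) (hρ₁ : ρ < 1)
    (X₀ B ζ : Ω → ℝ) (hX₀ : Measurable X₀) (hB : Measurable B) (hζ : Measurable ζ)
    (hindep : iIndepFun ![X₀, B, ζ] P)
    (hX₀law : Measure.map X₀ P = gammaMeasure α β)
    (hBlaw : Measure.map B P = _root_.betaMeasure (α * ρ) (α * (1 - ρ)))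
    (hζlaw : Measure.map ζ P = gammaMeasure (α * (1 - ρ)) β)
    (X₁ : Ω → ℝ) (hX₁ : X₁ = fun w => B w * X₀ w + ζ w) :
    (∫ w, X₀ w * X₁ w ∂P - (∫ w, X₀ w ∂P) * (∫ w, X₁ w ∂P)) /
        (Real.sqrt (variance X₀ P) * Real.sqrt (variance X₁ P)) = ρ := by
  have hp : 0 < α * ρ := by positivity
  have hq : 0 < α * (1 - ρ) := mul_pos hα (by linarith)
  have hpq : α * ρ + α * (1 - ρ) = α := by ring
  have lawX₀ : HasLaw X₀ (gammaMeasure (α * ρ + α * (1 - ρ)) β) P :=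
    ⟨hX₀.aemeasurable, by rw [hX₀law, hpq]⟩
  have lawB : HasLaw B (ProbabilityTheory.betaMeasure (α * ρ) (α * (1 - ρ))) P :=
    ⟨hB.aemeasurable, hBlaw.trans (betaMeasure_eq_betaMeasure _ _)⟩
  have lawζ : HasLaw ζ (gammaMeasure (α * (1 - ρ)) β) P := ⟨hζ.aemeasurable, hζlaw⟩
  have hm : ∀ i, Measurable (![X₀, B, ζ] i) := by
    intro i; fin_cases i <;> assumption
  have hBX₀ : B ⟂ᵢ[P] X₀ := hindep.indepFun (i := 1) (j := 0) (by decide)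
  have hX₀ζ : X₀ ⟂ᵢ[P] ζ := hindep.indepFun (i := 0) (j := 2) (by decide)
  have hBX₀ζ : (B * X₀) ⟂ᵢ[P] ζ := hindep.indepFun_mul_left hm 1 0 2 (by decide) (by decide)
  have hcorr := correlation_mul_add_of_hasLaw_beta_gamma hp hq hβ lawB lawX₀ lawζ hBX₀ hX₀ζ hBX₀ζ
  have mX₀ := lawX₀.memLp (memLp_id_gammaMeasure (add_pos hp hq) hβ)
  have mX₁ := (hBX₀.memLp_two_mul (lawB.memLp (memLp_id_betaMeasure hp hq)) mX₀).add
    (lawζ.memLp (memLp_id_gammaMeasure hq hβ))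
  rw [covariance_eq_sub mX₀ mX₁, hpq, mul_div_cancel_left₀ ρ hα.ne'] at hcorr
  subst hX₁
  exact hcorr
end

section
/- For λ > 0 and s, t ∈ ℝ, the sets G_t = {(x,y) : x ∈ ℝ, 0 ≤ y < λ e^{-2λ|t-x|}} satisfy: each G_t has Lebesgue area 1, and the intersection G_s ∩ G_t has Lebesgue area e^{-λ|s-t|}. -/
/-!
By Tonelli, the area under the graph of a nonnegative function is its integral, and
`f_u x = λ e^{-2λ|u - x|}` has integral `1`. The set `G s ∩ G t` is the region under
`min (f_s, f_t)`, and since `max (|s - x|, |t - x|) = |m - x| + |s - t| / 2` for the midpoint `m`,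
this minimum is `e^{-λ|s - t|} f_m`.
-/

open MeasureTheory Set Real

theorem volume_setOf_nonneg_lt {f : ℝ → ℝ} (hf : Measurable f) :
    volume {p : ℝ × ℝ | 0 ≤ p.2 ∧ p.2 < f p.1} = ∫⁻ x, ENNReal.ofReal (f x) := by
  have hS : MeasurableSet {p : ℝ × ℝ | 0 ≤ p.2 ∧ p.2 < f p.1} :=
    (measurableSet_le measurable_const measurable_snd).inter
      (measurableSet_lt measurable_snd (hf.comp measurable_fst))
  rw [Measure.volume_eq_prod, Measure.prod_apply hS]
  have hslice (x : ℝ) : Prod.mk x ⁻¹' {p : ℝ × ℝ | 0 ≤ p.2 ∧ p.2 < f p.1} = Ico 0 (f x) := rfl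
  simp only [hslice, Real.volume_Ico, sub_zero]

theorem setOf_nonneg_lt_inter (f g : ℝ → ℝ) :
    {p : ℝ × ℝ | 0 ≤ p.2 ∧ p.2 < f p.1} ∩ {p : ℝ × ℝ | 0 ≤ p.2 ∧ p.2 < g p.1} =
      {p : ℝ × ℝ | 0 ≤ p.2 ∧ p.2 < min (f p.1) (g p.1)} := by
  ext p
  simp only [mem_inter_iff, mem_ofPred_eq, lt_min_iff]
  tauto

theorem integral_exp_neg_mul_abs_sub {c : ℝ} (hc : 0 < c) (a : ℝ) :
    ∫ x, exp (-c * |a - x|) = 2 / c := by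
  rw [integral_sub_left_eq_self (fun x => exp (-c * |x|)),
    integral_comp_abs (f := fun x => exp (-c * x)), integral_exp_mul_Ioi (neg_lt_zero.2 hc),
    mul_zero, exp_zero, neg_div_neg_eq, mul_one_div]

theorem lintegral_ofReal_mul_exp_neg_two_mul_abs_sub {c : ℝ} (hc : 0 < c) (a : ℝ) :
    ∫⁻ x, ENNReal.ofReal (c * exp (-2 * c * |a - x|)) = 1 := by
  have hval := integral_exp_neg_mul_abs_sub (mul_pos two_pos hc) a
  rw [← ofReal_integral_eq_lintegral_ofReal, integral_const_mul, neg_mul, hval]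
  · field_simp
    exact ENNReal.ofReal_one
  · exact (Integrable.of_integral_ne_zero (by rw [neg_mul, hval]; positivity)).const_mul c
  · exact Filter.Eventually.of_forall fun x => by positivity

theorem max_abs_sub_abs_sub (s t x : ℝ) :
    max |s - x| |t - x| = |(s + t) / 2 - x| + |s - t| / 2 := by
  rcases max_cases |s - x| |t - x| with ⟨hmax, _⟩ | ⟨hmax, _⟩ <;> rw [hmax] <;>
    cases abs_cases (s - x) <;> cases abs_cases (t - x) <;>
    cases abs_cases ((s + t) / 2 - x) <;> cases abs_cases (s - t) <;> linarith

theorem random_measure_sets_area (lam : ℝ) (hlam : 0 < lam) (s t : ℝ) :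
    let G : ℝ → Set (ℝ × ℝ) :=
      fun u => {p : ℝ × ℝ | 0 ≤ p.2 ∧ p.2 < lam * Real.exp (-2 * lam * |u - p.1|)}
    volume (G t) = 1 ∧
      volume (G s ∩ G t) = ENNReal.ofReal (Real.exp (-lam * |s - t|)) := by
  intro G
  let g (u x : ℝ) : ℝ := lam * exp (-2 * lam * |u - x|)
  have hG (u : ℝ) : G u = {p | 0 ≤ p.2 ∧ p.2 < g u p.1} := rfl
  have hmin (x : ℝ) : min (g s x) (g t x) = exp (-lam * |s - t|) * g ((s + t) / 2) x := by
    have hanti : Antitone fun r => lam * exp (-2 * lam * r) := fun a b hab =>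
      mul_le_mul_of_nonneg_left (exp_le_exp.2 (by nlinarith)) hlam.le
    simp only [g, ← hanti.map_max, max_abs_sub_abs_sub, mul_add, exp_add]
    ring_nf
  refine ⟨?_, ?_⟩
  · rw [hG, volume_setOf_nonneg_lt (by fun_prop),
      lintegral_ofReal_mul_exp_neg_two_mul_abs_sub hlam]
  · rw [hG, hG, setOf_nonneg_lt_inter,
      volume_setOf_nonneg_lt (f := fun x => min (g s x) (g t x)) (by fun_prop)]
    simp_rw [hmin, ENNReal.ofReal_mul (exp_pos _).le]
    rw [lintegral_const_mul' _ _ ENNReal.ofReal_ne_top,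
      lintegral_ofReal_mul_exp_neg_two_mul_abs_sub hlam, mul_one]
end

section
/- Let Y = Σⱼ uⱼ Xⱼ be a linear combination of independent Poisson random variables Xⱼ ~ Poisson(νⱼ) with Σⱼ min(1,|uⱼ|) νⱼ < ∞. Then Y is almost surely finite and its characteristic function is E e^{iθY} = exp( Σⱼ (e^{iθuⱼ} - 1) νⱼ ). -/
/-!
Since `min 1 |u j| * X j` has mean `min 1 |u j| * ν j`, the series `∑ min 1 |u j| * X j`
converges almost surely. Because the `X j` are integers, all but finitely many of its terms have
`X j = 0` or `|u j| < 1`, so it dominates `∑ |u j * X j|` up to finitely many terms. By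
independence, the characteristic function of a partial sum is the product of the Poisson
characteristic functions `exp ((exp (i θ u j) - 1) ν j)`; as the number of terms grows, the left
side converges by bounded convergence and the right side because
`‖exp (i θ u) - 1‖ ≤ (2 + |θ|) min 1 |u|`.
-/

open MeasureTheory ProbabilityTheory Complex Filter Finset
open scoped NNReal ENNReal Nat Topology

lemma hasSum_natCast_mul_poissonMeasure (r : ℝ≥0) :
    HasSum (fun n : ℕ => n * (Real.exp (-r) * r ^ n / n !)) r := by
  have hshift : (fun n : ℕ => ((n + 1 : ℕ) : ℝ) * (Real.exp (-r) * r ^ (n + 1) / (n + 1)!)) =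
      fun n => r * (Real.exp (-r) * r ^ n / n !) := by
    ext n
    rw [Nat.factorial_succ]
    push_cast
    field_simp
    ring
  have h := (hasSum_one_poissonMeasure r).mul_left (r : ℝ)
  rw [mul_one, ← hshift] at h
  have := (hasSum_nat_add_iff (f := fun n : ℕ => n * (Real.exp (-r) * r ^ n / n !)) 1).mp h
  rwa [Finset.sum_range_one, Nat.cast_zero, zero_mul, add_zero] at this

lemma lintegral_natCast_poissonMeasure (r : ℝ≥0) :
    ∫⁻ n, (n : ℝ≥0∞) ∂poissonMeasure r = r := by
  have h := hasSum_natCast_mul_poissonMeasure r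
  rw [poissonMeasure, lintegral_sum_measure, ← ENNReal.ofReal_coe_nnreal]
  conv_rhs => rw [← h.tsum_eq, ENNReal.ofReal_tsum_of_nonneg (fun n => by positivity) h.summable]
  congr 1 with n
  rw [lintegral_smul_measure, lintegral_dirac, smul_eq_mul, ENNReal.ofReal_mul (by positivity),
    mul_comm, ENNReal.ofReal_natCast]

lemma summable_mul_natCast_of_summable_min_mul {ι : Type*} {u : ι → ℝ} {n : ι → ℕ}
    (h : Summable fun j => min 1 |u j| * n j) : Summable fun j => u j * n j := by
  refine h.of_norm_bounded_eventually ?_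
  filter_upwards [h.tendsto_cofinite_zero.eventually (gt_mem_nhds one_pos)] with j hj
  rw [norm_mul, Real.norm_eq_abs, Real.norm_natCast]
  rcases Nat.eq_zero_or_pos (n j) with hzero | hpos
  · simp [hzero]
  · have hn : (1 : ℝ) ≤ n j := by exact_mod_cast hpos
    have hu : min 1 |u j| < 1 := lt_of_le_of_lt (le_mul_of_one_le_right (by positivity) hn) hj
    rw [min_eq_right (min_lt_iff.mp hu |>.resolve_left (lt_irrefl 1)).le]

lemma norm_exp_mul_I_sub_one_le (t x : ℝ) :
    ‖cexp (t * x * I) - 1‖ ≤ (2 + |t|) * min 1 |x| := by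
  rcases le_total |x| 1 with hx | hx
  · rw [min_eq_right hx]
    calc ‖cexp (t * x * I) - 1‖ ≤ |t * x| := by
          simpa [mul_comm] using Real.norm_exp_I_mul_ofReal_sub_one_le (x := t * x)
      _ ≤ (2 + |t|) * |x| := by rw [abs_mul]; gcongr; linarith
  · rw [min_eq_left hx]
    calc ‖cexp (t * x * I) - 1‖ ≤ ‖cexp (t * x * I)‖ + ‖(1 : ℂ)‖ := norm_sub_le _ _
      _ ≤ (2 + |t|) * 1 := by
          rw [← ofReal_mul, norm_exp_ofReal_mul_I]; norm_num

section

variable {Ω : Type*} {mΩ : MeasurableSpace Ω} {P : Measure Ω}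

lemma lintegral_natCast_of_map_eq_poissonMeasure {X : Ω → ℕ} {r : ℝ≥0} (hX : Measurable X)
    (hlaw : P.map X = poissonMeasure r) : ∫⁻ w, (X w : ℝ≥0∞) ∂P = r := by
  rw [← lintegral_map (f := fun n : ℕ => (n : ℝ≥0∞)) (by fun_prop) hX, hlaw,
    lintegral_natCast_poissonMeasure]

lemma charFun_map_mul_natCast_of_map_eq_poissonMeasure {X : Ω → ℕ} {r : ℝ≥0}
    (hX : Measurable X) (hlaw : P.map X = poissonMeasure r) (c t : ℝ) :
    charFun (P.map fun w => c * (X w : ℝ)) t = cexp ((cexp (t * c * I) - 1) * r) := by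
  rw [charFun_map_mul_comp (by fun_prop), ← Function.comp_def,
    ← Measure.map_map (by fun_prop) hX, hlaw, charFun_map_cast_poissonMeasure]
  push_cast
  ring_nf

lemma tendsto_charFun_map_of_ae_tendsto [IsFiniteMeasure P] {S : ℕ → Ω → ℝ}
    {Y : Ω → ℝ} (hS : ∀ n, AEMeasurable (S n) P)
    (hlim : ∀ᵐ w ∂P, Tendsto (fun n => S n w) atTop (𝓝 (Y w))) (t : ℝ) :
    Tendsto (fun n => charFun (P.map (S n)) t) atTop (𝓝 (∫ w, cexp (t * Y w * I) ∂P)) := by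
  have hchar (n : ℕ) : charFun (P.map (S n)) t = ∫ w, cexp (t * S n w * I) ∂P := by
    rw [charFun_apply_real, integral_map (hS n) (by fun_prop)]
  simp_rw [hchar]
  refine tendsto_integral_filter_of_norm_le_const (.of_forall fun n => by fun_prop)
    ⟨1, .of_forall fun n => .of_forall fun w => ?_⟩ ?_
  · rw [← ofReal_mul, norm_exp_ofReal_mul_I]
  · filter_upwards [hlim] with w hw
    exact (continuous_exp.tendsto _).comp
      (((continuous_ofReal.tendsto _).comp hw).const_mul _ |>.mul_const _)

lemma ae_summable_mul_natCast_of_map_eq_poissonMeasure {u : ℕ → ℝ} {ν : ℕ → ℝ≥0}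
    {X : ℕ → Ω → ℕ} (hX : ∀ j, Measurable (X j))
    (hlaw : ∀ j, P.map (X j) = poissonMeasure (ν j))
    (hsummable : Summable fun j => min 1 |u j| * (ν j : ℝ)) :
    ∀ᵐ w ∂P, Summable fun j => u j * (X j w : ℝ) := by
  have hnorm (j : ℕ) : eLpNorm (fun w => min 1 |u j| * (X j w : ℝ)) 1 P =
      ENNReal.ofReal (min 1 |u j| * ν j) := by
    have hc : 0 ≤ min 1 |u j| := by positivity
    rw [eLpNorm_one_eq_lintegral_enorm]
    simp_rw [enorm_mul, Real.enorm_of_nonneg hc, Real.enorm_natCast]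
    rw [lintegral_const_mul _ (by fun_prop),
      lintegral_natCast_of_map_eq_poissonMeasure (hX j) (hlaw j), ENNReal.ofReal_mul hc,
      ENNReal.ofReal_coe_nnreal]
  have hfin : ∑' j, eLpNorm (fun w => min 1 |u j| * (X j w : ℝ)) 1 P ≠ ∞ := by
    simp_rw [hnorm]
    rw [← ENNReal.ofReal_tsum_of_nonneg (fun j => by positivity) hsummable]
    exact ENNReal.ofReal_ne_top
  filter_upwards [summable_norm_of_tsum_eLpNorm_ne_top le_rfl (fun j => by fun_prop) hfin]
    with w hw
  refine summable_mul_natCast_of_summable_min_mul (hw.congr fun j => ?_)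
  rw [Real.norm_of_nonneg (by positivity)]

lemma charFun_map_sum_range_mul_natCast [IsProbabilityMeasure P] {u : ℕ → ℝ}
    {ν : ℕ → ℝ≥0} {X : ℕ → Ω → ℕ} (hX : ∀ j, Measurable (X j))
    (hindep : iIndepFun X P) (hlaw : ∀ j, P.map (X j) = poissonMeasure (ν j))
    (n : ℕ) (t : ℝ) :
    charFun (P.map fun w => ∑ j ∈ range n, u j * (X j w : ℝ)) t =
      cexp (∑ j ∈ range n, (cexp (t * u j * I) - 1) * ν j) := by
  have hindep' : iIndepFun (fun j w => u j * (X j w : ℝ)) P :=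
    hindep.comp (fun j (m : ℕ) => u j * (m : ℝ)) fun j => by fun_prop
  rw [(hindep'.restrict _).charFun_map_fun_finsetSum_eq_prod fun j _ => by fun_prop,
    Finset.prod_apply, Complex.exp_sum]
  exact prod_congr rfl fun j _ =>
    charFun_map_mul_natCast_of_map_eq_poissonMeasure (hX j) (hlaw j) _ _

end

theorem poisson_linear_combination_charFun
    {Ω : Type*} [MeasurableSpace Ω] (P : Measure Ω) [IsProbabilityMeasure P]
    (u : ℕ → ℝ) (ν : ℕ → NNReal)
    (X : ℕ → Ω → ℕ) (hX : ∀ j, Measurable (X j))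
    (hindep : iIndepFun X P)
    (hlaw : ∀ j, Measure.map (X j) P = poissonMeasure (ν j))
    (hsummable : Summable fun j => min 1 |u j| * (ν j : ℝ)) :
    (∀ᵐ w ∂P, Summable fun j => u j * (X j w : ℝ)) ∧
      ∀ θ : ℝ,
        (∫ w, Complex.exp (I * θ * (∑' j, u j * (X j w : ℝ))) ∂P) =
          Complex.exp (∑' j, (Complex.exp (I * θ * u j) - 1) * (ν j : ℝ)) := by
  have hae := ae_summable_mul_natCast_of_map_eq_poissonMeasure hX hlaw hsummable
  refine ⟨hae, fun θ => ?_⟩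
  have hexponent : Summable fun j => (cexp (θ * u j * I) - 1) * ν j :=
    .of_norm_bounded (hsummable.mul_left (2 + |θ|)) fun j => by
      rw [norm_mul, norm_real, Real.norm_of_nonneg (ν j).coe_nonneg, ← mul_assoc]
      exact mul_le_mul_of_nonneg_right (norm_exp_mul_I_sub_one_le θ (u j)) (ν j).coe_nonneg
  have hpartial := tendsto_charFun_map_of_ae_tendsto (P := P)
    (S := fun n w => ∑ j ∈ range n, u j * (X j w : ℝ)) (fun n => by fun_prop)
    (by filter_upwards [hae] with w hw using hw.hasSum.tendsto_sum_nat) θ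
  simp_rw [charFun_map_sum_range_mul_natCast hX hindep hlaw] at hpartial
  have hcharFun := tendsto_nhds_unique hpartial
    ((continuous_exp.tendsto _).comp hexponent.hasSum.tendsto_sum_nat)
  convert hcharFun using 4 <;> ring_nf
end
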